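/- arXiv:2403.09248 — 2 statements merged into one kernel-verified Lean document; each statement's English description precedes it below -/
import Mathlib

section
/- Let G=(V,E) be a finite simple graph. Then rank(EMH_{2,2}(G)) = 6·c(G,C_3) + Σ_{{u,v}} 2·(|V_{u,v}| − 1), where the sum ranges over unordered pairs {u,v} of vertices with d(u,v) = 2 and V_{u,v} = {w ∈ V : w is adjacent to both u and v}, and C_3 is the cycle graph on 3 vertices. -/
open scoped Classical

variable {V : Type*}

/-- Length of the walk described by a list of landmarks: sum of path-metric
distances between consecutive entries (`⊤`-valued if some pair is unreachable). -/
noncomputable def mlen (G : SimpleGraph V) : List V → ℕ∞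
  | [] => 0
  | [_] => 0
  | a :: b :: t => G.edist a b + mlen G (b :: t)

/-- A list of landmarks is a trail if consecutive entries are distinct and reachable. -/
def IsTrailList (G : SimpleGraph V) (l : List V) : Prop :=
  l.Chain' fun a b => a ≠ b ∧ G.Reachable a b

/-- `trails G k ℓ` is the set `T_{k,ℓ}(G)` of `k`-trails of length `ℓ`,
encoded as lists with `k+1` entries. -/
def trails (G : SimpleGraph V) (k ℓ : ℕ) : Set (List V) :=
  {l | l.length = k + 1 ∧ IsTrailList G l ∧ mlen G l = (ℓ : ℕ∞)}

/-- `etrails G k ℓ` is the set `ET_{k,ℓ}(G)` of eulerian `k`-trails of length `ℓ`. -/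
def etrails (G : SimpleGraph V) (k ℓ : ℕ) : Set (List V) :=
  {l | l ∈ trails G k ℓ ∧ l.Nodup}

/-- Boundary of a single generator: `∂_{·,ℓ}(x₀,…,x_k) = Σ_{i=1}^{k-1} (-1)^i ∂^i`,
where `∂^i` deletes the `i`-th landmark if this does not change the length. -/
noncomputable def bdryElt (G : SimpleGraph V) (ℓ : ℕ) (l : List V) : List V →₀ ℤ :=
  ∑ i ∈ Finset.Ioo 0 (l.length - 1),
    if mlen G (l.eraseIdx i) = (ℓ : ℕ∞) then ((-1 : ℤ) ^ i) • Finsupp.single (l.eraseIdx i) 1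
    else 0

/-- The magnitude differential (length parameter `ℓ`) on the ambient free abelian group
on all landmark lists.  Its restriction to `MC_{k,ℓ}(G)` (chains supported on
`trails G k ℓ`) is `∂_{k,ℓ}`. -/
noncomputable def bdry (G : SimpleGraph V) (ℓ : ℕ) : (List V →₀ ℤ) →ₗ[ℤ] (List V →₀ ℤ) :=
  Finsupp.lsum ℤ fun l => LinearMap.toSpanSingleton ℤ _ (bdryElt G ℓ l)

/-- `MC_{k,ℓ}(G)`: the free abelian group on `T_{k,ℓ}(G)`, realized as the submodule of
finitely supported `ℤ`-valued functions supported on trails. -/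
noncomputable def MC (G : SimpleGraph V) (k ℓ : ℕ) : Submodule ℤ (List V →₀ ℤ) :=
  Finsupp.supported ℤ ℤ (trails G k ℓ)

/-- `EMC_{k,ℓ}(G)`: the free abelian group on `ET_{k,ℓ}(G)`. -/
noncomputable def EMC (G : SimpleGraph V) (k ℓ : ℕ) : Submodule ℤ (List V →₀ ℤ) :=
  Finsupp.supported ℤ ℤ (etrails G k ℓ)

/-- `EMH_{k,k}(G) = ker(∂_{k,k}|_{EMC_{k,k}(G)})`, the first-diagonal eulerian magnitude
homology group (`EMC_{k+1,k}(G) = 0`, so homology is just the kernel). -/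
noncomputable def EMHkk (G : SimpleGraph V) (k : ℕ) : Submodule ℤ (List V →₀ ℤ) :=
  EMC G k k ⊓ LinearMap.ker (bdry G k)

/-- `MH_{k,k}(G) = ker(∂_{k,k}|_{MC_{k,k}(G)})`. -/
noncomputable def MHkk (G : SimpleGraph V) (k : ℕ) : Submodule ℤ (List V →₀ ℤ) :=
  MC G k k ⊓ LinearMap.ker (bdry G k)

/-- `β_{k,k}(G)`, the rank of `EMH_{k,k}(G)`. -/
noncomputable def emBetti (G : SimpleGraph V) (k : ℕ) : ℕ :=
  Module.finrank ℤ (EMHkk G k)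

/-- `c(G,H)`: the number of vertex subsets of `G` whose induced subgraph is isomorphic
to `H`. -/
noncomputable def subgraphCount (G : SimpleGraph V) {W : Type*} (H : SimpleGraph W) : ℕ :=
  Set.ncard {s : Set V | Nonempty ((G.induce s) ≃g H)}

/-!
`EMC_{2,2}(G)` is free on the 2-paths `[a, b, c]` (`a ~ b ~ c`, `a ≠ c`), and `∂[a, b, c]` is
`-[a, c]` when `d(a, c) = 2` and `0` when `a ~ c`. Every pair at distance 2 has a common
neighbour, so `∂` maps `EMC_{2,2}(G)` onto the free group on the ordered pairs at distance 2 and,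
by rank–nullity, `rank EMH_{2,2}(G)` is the number of 2-paths minus the number of such pairs.
The 2-paths with `a ~ c` are the 6 orderings of the triangles of `G`; those over a pair `(a, c)`
at distance 2 are indexed by the common neighbours `b`. Grouping each unordered pair `{u, v}`
with its two orderings gives the factor 2.
-/

open Finset

section RankNullity
universe u v w
variable {R : Type u} {M : Type v} {N : Type w} [Ring R] [StrongRankCondition R]
  [HasRankNullity.{v} R] [AddCommGroup M] [Module R M] [AddCommGroup N] [Module R N]

theorem Submodule.finrank_inf_ker_add_finrank_map (p : Submodule R M) [Module.Finite R p]
    (f : M →ₗ[R] N) :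
    Module.finrank R ↥(p ⊓ LinearMap.ker f) + Module.finrank R ↥(p.map f) =
      Module.finrank R p := by
  have hker : LinearMap.ker (f.domRestrict p) = (p ⊓ LinearMap.ker f).comap p.subtype := by
    rw [LinearMap.ker_domRestrict, Submodule.comap_inf, Submodule.comap_subtype_self, top_inf_eq]
  rw [← (Submodule.comapSubtypeEquivOfLe inf_le_left).finrank_eq, ← hker,
    ← LinearMap.range_domRestrict, ← (f.domRestrict p).quotKerEquivRange.finrank_eq, add_comm]
  exact (LinearMap.ker (f.domRestrict p)).finrank_quotient_add_finrank

end RankNullity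

theorem Finsupp.finrank_supported_self {R α : Type*} [Ring R] [StrongRankCondition R]
    (s : Finset α) : Module.finrank R (Finsupp.supported R R (s : Set α)) = #s := by
  rw [(Finsupp.supportedEquivFinsupp (s : Set α)).finrank_eq, Module.finrank_finsupp_self]
  simp

instance Finsupp.finite_supported_self {R α : Type*} [Ring R] (s : Finset α) :
    Module.Finite R (Finsupp.supported R R (s : Set α)) :=
  Module.Finite.equiv (Finsupp.supportedEquivFinsupp (s : Set α)).symm

theorem ENat.eq_one_and_eq_one_of_add_eq_two {x y : ℕ∞} (hx : 1 ≤ x) (hy : 1 ≤ y)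
    (h : x + y = 2) : x = 1 ∧ y = 1 := by
  have hx' : x ≠ ⊤ := fun hx' => by simp [hx'] at h
  have hy' : y ≠ ⊤ := fun hy' => by simp [hy'] at h
  lift x to ℕ using hx'
  lift y to ℕ using hy'
  norm_cast at *
  omega

theorem Finset.triple_eq_triple_iff {α : Type*} [DecidableEq α] {a b c x y z : α}
    (hxy : x ≠ y) (hxz : x ≠ z) (hyz : y ≠ z) :
    ({x, y, z} : Finset α) = {a, b, c} ↔
      x = a ∧ y = b ∧ z = c ∨ x = a ∧ y = c ∧ z = b ∨ x = b ∧ y = a ∧ z = c ∨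
        x = b ∧ y = c ∧ z = a ∨ x = c ∧ y = a ∧ z = b ∨ x = c ∧ y = b ∧ z = a := by
  constructor
  · intro h
    have hmem : ∀ w, w = x ∨ w = y ∨ w = z ↔ w = a ∨ w = b ∨ w = c := by
      simpa using Finset.ext_iff.mp h
    have := hmem x; have := hmem y; have := hmem z; have := hmem a; have := hmem b; have := hmem c
    grind
  · rintro (⟨rfl, rfl, rfl⟩ | ⟨rfl, rfl, rfl⟩ | ⟨rfl, rfl, rfl⟩ | ⟨rfl, rfl, rfl⟩ | ⟨rfl, rfl, rfl⟩ |
      ⟨rfl, rfl, rfl⟩) <;> ext <;> simp <;> tauto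

theorem Finset.sum_filter_rel_eq_sum_card_two {α M : Type*} [Fintype α] [DecidableEq α]
    [AddCommMonoid M] (r : α → α → Prop) [DecidableRel r] (hsymm : ∀ u v, r u v → r v u)
    (hirrefl : ∀ u, ¬r u u) (f : Finset α → M) :
    ∑ p ∈ univ.filter (fun p : α × α => r p.1 p.2), f {p.1, p.2} =
      ∑ s ∈ univ.filter (fun s : Finset α => #s = 2 ∧ ∃ u ∈ s, ∃ v ∈ s, u ≠ v ∧ r u v),
        2 • f s := by
  have hmaps : ∀ p ∈ univ.filter (fun p : α × α => r p.1 p.2), ({p.1, p.2} : Finset α) ∈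
      univ.filter (fun s : Finset α => #s = 2 ∧ ∃ u ∈ s, ∃ v ∈ s, u ≠ v ∧ r u v) := by
    rintro ⟨u, v⟩ huv
    replace huv : r u v := (mem_filter.mp huv).2
    have hne : u ≠ v := fun h => hirrefl u (h ▸ huv)
    exact mem_filter.mpr ⟨mem_univ _, card_pair hne, u, by simp, v, by simp, hne, huv⟩
  rw [← sum_fiberwise_of_maps_to hmaps]
  refine sum_congr rfl fun s hs => ?_
  obtain ⟨hcard, u, hu, v, hv, hne, huv⟩ := (mem_filter.mp hs).2
  obtain rfl : s = {u, v} :=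
    (eq_of_subset_of_card_le (insert_subset hu (singleton_subset_iff.mpr hv))
      (by rw [hcard, card_pair hne])).symm
  have hfiber : (univ.filter fun p : α × α => r p.1 p.2).filter
      (fun p => ({p.1, p.2} : Finset α) = {u, v}) = {(u, v), (v, u)} := by
    ext ⟨x, y⟩
    simp only [mem_filter, mem_univ, true_and, mem_insert, mem_singleton, Prod.mk.injEq,
      ← coe_inj, coe_pair, Set.pair_eq_pair_iff]
    constructor
    · exact And.right
    · rintro (⟨rfl, rfl⟩ | ⟨rfl, rfl⟩)
      exacts [⟨huv, .inl ⟨rfl, rfl⟩⟩, ⟨hsymm _ _ huv, .inr ⟨rfl, rfl⟩⟩]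
  rw [hfiber, sum_pair (by simp [hne]), pair_comm v u, two_nsmul]

theorem SimpleGraph.nonempty_iso_top_iff {α β : Type*} (H : SimpleGraph α) :
    Nonempty (H ≃g (⊤ : SimpleGraph β)) ↔ H = ⊤ ∧ Nonempty (α ≃ β) := by
  constructor
  · rintro ⟨e⟩
    refine ⟨?_, ⟨e.toEquiv⟩⟩
    ext x y
    rw [← e.map_adj_iff, SimpleGraph.top_adj, SimpleGraph.top_adj, e.injective.ne_iff]
  · rintro ⟨rfl, ⟨e⟩⟩
    exact ⟨SimpleGraph.Iso.completeGraph e⟩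

section EulerianMagnitude
variable (G : SimpleGraph V)

theorem mem_etrails_two_two {l : List V} :
    l ∈ etrails G 2 2 ↔ ∃ a b c, G.Adj a b ∧ G.Adj b c ∧ a ≠ c ∧ l = [a, b, c] := by
  constructor
  · rintro ⟨⟨hlen, -, hlen2⟩, hnodup⟩
    obtain ⟨a, b, c, rfl⟩ := List.length_eq_three.mp hlen
    simp only [mlen, add_zero, List.nodup_cons, List.mem_cons, List.not_mem_nil, or_false,
      not_or] at hlen2 hnodup
    obtain ⟨⟨hab, hac⟩, hbc, -⟩ := hnodup
    obtain ⟨hab1, hbc1⟩ := ENat.eq_one_and_eq_one_of_add_eq_two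
      (Order.one_le_iff_pos.mpr (G.edist_pos_of_ne hab))
      (Order.one_le_iff_pos.mpr (G.edist_pos_of_ne hbc)) hlen2
    exact ⟨a, b, c, G.edist_eq_one_iff_adj.mp hab1, G.edist_eq_one_iff_adj.mp hbc1, hac, rfl⟩
  · rintro ⟨a, b, c, hab, hbc, hac, rfl⟩
    refine ⟨⟨rfl, ?_, ?_⟩, ?_⟩
    · exact .cons_cons ⟨hab.ne, hab.reachable⟩ (.cons_cons ⟨hbc.ne, hbc.reachable⟩ (.singleton c))
    · simp only [mlen, add_zero]
      rw [G.edist_eq_one_iff_adj.mpr hab, G.edist_eq_one_iff_adj.mpr hbc, one_add_one_eq_two]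
      rfl
    · simp [hab.ne, hbc.ne, hac]

theorem bdry_single_triple (a b c : V) (r : ℤ) :
    bdry G 2 (Finsupp.single [a, b, c] r) =
      if G.edist a c = 2 then Finsupp.single [a, c] (-r) else 0 := by
  have : Finset.Ioo 0 2 = {1} := rfl
  simp [bdry, bdryElt, mlen, this]

variable [Fintype V]

noncomputable def twoPaths : Finset (V × V × V) :=
  univ.filter fun t => G.Adj t.1 t.2.1 ∧ G.Adj t.2.1 t.2.2 ∧ t.1 ≠ t.2.2

noncomputable def distTwoPairs : Finset (V × V) :=
  univ.filter fun p => G.edist p.1 p.2 = 2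

theorem etrails_two_two_eq :
    etrails G 2 2 = ↑((twoPaths G).image fun t => [t.1, t.2.1, t.2.2]) := by
  ext l
  simp only [mem_etrails_two_two, coe_image, Set.mem_image, mem_coe, twoPaths, mem_filter,
    mem_univ, true_and, Prod.exists]
  constructor
  · rintro ⟨a, b, c, hab, hbc, hac, rfl⟩
    exact ⟨a, b, c, ⟨hab, hbc, hac⟩, rfl⟩
  · rintro ⟨a, b, c, ⟨hab, hbc, hac⟩, rfl⟩
    exact ⟨a, b, c, hab, hbc, hac, rfl⟩

theorem map_bdry_EMC_two_two :
    (EMC G 2 2).map (bdry G 2) =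
      Finsupp.supported ℤ ℤ ↑((distTwoPairs G).image fun p => [p.1, p.2]) := by
  rw [EMC, Finsupp.supported_eq_span_single, Finsupp.supported_eq_span_single,
    Submodule.map_span]
  apply le_antisymm <;> rw [Submodule.span_le]
  · rintro _ ⟨_, ⟨l, hl, rfl⟩, rfl⟩
    obtain ⟨a, b, c, -, -, -, rfl⟩ := (mem_etrails_two_two G).mp hl
    rw [bdry_single_triple]
    split_ifs with hac
    · rw [Finsupp.single_neg]
      exact Submodule.neg_mem _
        (Submodule.subset_span ⟨[a, c], by simpa [distTwoPairs] using hac, rfl⟩)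
    · exact zero_mem _
  · rintro _ ⟨_, hl, rfl⟩
    obtain ⟨⟨a, c⟩, hac, rfl⟩ := mem_image.mp hl
    replace hac : G.edist a c = 2 := (mem_filter.mp hac).2
    obtain ⟨hne, -, b, hb⟩ := G.edist_eq_two_iff.mp hac
    obtain ⟨hab, hcb⟩ := G.mem_commonNeighbors.mp hb
    have hpath : [a, b, c] ∈ etrails G 2 2 :=
      (mem_etrails_two_two G).mpr ⟨a, b, c, hab, hcb.symm, hne, rfl⟩
    have : Finsupp.single [a, c] (1 : ℤ) = -bdry G 2 (Finsupp.single [a, b, c] 1) := by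
      rw [bdry_single_triple, if_pos hac, Finsupp.single_neg, neg_neg]
    show Finsupp.single [a, c] 1 ∈ _
    rw [this]
    exact Submodule.neg_mem _ (Submodule.subset_span ⟨_, ⟨_, hpath, rfl⟩, rfl⟩)

theorem finrank_EMHkk_two_add_card_distTwoPairs :
    Module.finrank ℤ (EMHkk G 2) + #(distTwoPairs G) = #(twoPaths G) := by
  have hEMC : EMC G 2 2 =
      Finsupp.supported ℤ ℤ ↑((twoPaths G).image fun t => [t.1, t.2.1, t.2.2]) := by
    rw [EMC, etrails_two_two_eq]
  have : Module.Finite ℤ (EMC G 2 2) := hEMC ▸ inferInstance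
  have hdim : Module.finrank ℤ (EMC G 2 2) = #(twoPaths G) := by
    rw [hEMC, Finsupp.finrank_supported_self,
      card_image_of_injective _ (by rintro ⟨a, b, c⟩ ⟨a', b', c'⟩ h; simp_all)]
  have h := Submodule.finrank_inf_ker_add_finrank_map (EMC G 2 2) (bdry G 2)
  rwa [map_bdry_EMC_two_two, Finsupp.finrank_supported_self, hdim,
    card_image_of_injective _ (by rintro ⟨a, c⟩ ⟨a', c'⟩ h; simp_all)] at h

theorem card_twoPaths_filter_adj :
    #((twoPaths G).filter fun t => G.Adj t.1 t.2.2) = 6 * #(G.cliqueFinset 3) := by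
  rw [card_eq_sum_card_fiberwise (f := fun t => ({t.1, t.2.1, t.2.2} : Finset V))
    (t := G.cliqueFinset 3)]
  · rw [mul_comm, ← smul_eq_mul, ← sum_const]
    refine sum_congr rfl fun s hs => ?_
    obtain ⟨a, b, c, hab, hac, hbc, rfl⟩ := G.is3Clique_iff.mp (G.mem_cliqueFinset_iff.mp hs)
    have hfiber : ((twoPaths G).filter fun t => G.Adj t.1 t.2.2).filter
        (fun t => ({t.1, t.2.1, t.2.2} : Finset V) = {a, b, c}) =
        {(a, b, c), (a, c, b), (b, a, c), (b, c, a), (c, a, b), (c, b, a)} := by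
      ext ⟨x, y, z⟩
      simp only [twoPaths, mem_filter, mem_univ, true_and, mem_insert, mem_singleton,
        Prod.mk.injEq]
      constructor
      · rintro ⟨⟨⟨hxy, hyz, hxz⟩, -⟩, h⟩
        exact (triple_eq_triple_iff hxy.ne hxz hyz.ne).mp h
      · intro h
        have hxyz : ({x, y, z} : Finset V) = {a, b, c} := by
          rcases h with ⟨rfl, rfl, rfl⟩ | ⟨rfl, rfl, rfl⟩ | ⟨rfl, rfl, rfl⟩ | ⟨rfl, rfl, rfl⟩ |
            ⟨rfl, rfl, rfl⟩ | ⟨rfl, rfl, rfl⟩ <;> ext <;> simp <;> tauto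
        obtain ⟨hxy, hxz, hyz⟩ :=
          G.is3Clique_triple_iff.mp (hxyz ▸ G.is3Clique_triple_iff.mpr ⟨hab, hac, hbc⟩)
        exact ⟨⟨⟨hxy, hyz, hxz.ne⟩, hxz⟩, hxyz⟩
    rw [hfiber]
    simp [hab.ne, hac.ne, hbc.ne, hab.ne.symm, hac.ne.symm, hbc.ne.symm]
  · rintro ⟨a, b, c⟩ ht
    simp only [twoPaths, mem_coe, mem_filter, mem_univ, true_and] at ht
    exact G.mem_cliqueFinset_iff.mpr (G.is3Clique_triple_iff.mpr ⟨ht.1.1, ht.2, ht.1.2.1⟩)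

theorem card_twoPaths_filter_not_adj :
    #((twoPaths G).filter fun t => ¬G.Adj t.1 t.2.2) =
      ∑ p ∈ distTwoPairs G, (G.commonNeighbors p.1 p.2).ncard := by
  rw [card_eq_sum_card_fiberwise (f := fun t => (t.1, t.2.2)) (t := distTwoPairs G)]
  · refine sum_congr rfl ?_
    rintro ⟨u, v⟩ huv
    obtain ⟨hne, hnadj, -⟩ := G.edist_eq_two_iff.mp (mem_filter.mp huv).2
    rw [← Set.ncard_coe_finset, ← Set.ncard_image_of_injective (G.commonNeighbors u v)
      (f := fun w => (u, w, v)) (fun w w' h => by simpa using h)]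
    refine congrArg Set.ncard ?_
    ext ⟨x, y, z⟩
    simp only [Prod.mk.injEq, twoPaths, ne_eq, coe_filter, mem_filter, mem_univ, true_and,
      Set.mem_ofPred_eq, Set.mem_image, G.mem_commonNeighbors, existsAndEq]
    constructor
    · rintro ⟨⟨⟨hxy, hyz, -⟩, -⟩, rfl, rfl⟩
      exact ⟨⟨hxy, hyz.symm⟩, rfl, rfl⟩
    · rintro ⟨⟨huy, hvy⟩, rfl, rfl⟩
      exact ⟨⟨⟨huy, hvy.symm, hne⟩, hnadj⟩, rfl, rfl⟩
  · rintro ⟨a, b, c⟩ ht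
    simp only [twoPaths, mem_coe, mem_filter, mem_univ, true_and] at ht
    obtain ⟨⟨hab, hbc, hac⟩, hnadj⟩ := ht
    exact mem_filter.mpr ⟨mem_univ _, G.edist_eq_two_iff.mpr
      ⟨hac, hnadj, b, G.mem_commonNeighbors.mpr ⟨hab, hbc.symm⟩⟩⟩

theorem finrank_EMHkk_two :
    Module.finrank ℤ (EMHkk G 2) = 6 * #(G.cliqueFinset 3) +
      ∑ p ∈ distTwoPairs G, ((G.commonNeighbors p.1 p.2).ncard - 1) := by
  have hrank := finrank_EMHkk_two_add_card_distTwoPairs G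
  rw [← card_filter_add_card_filter_not (s := twoPaths G) (fun t => G.Adj t.1 t.2.2),
    card_twoPaths_filter_adj, card_twoPaths_filter_not_adj] at hrank
  have hcommon : ∀ p ∈ distTwoPairs G, 1 ≤ (G.commonNeighbors p.1 p.2).ncard := fun p hp =>
    (Set.ncard_pos (Set.toFinite _)).mpr (G.edist_eq_two_iff.mp (mem_filter.mp hp).2).2.2
  have hle := sum_le_sum hcommon
  rw [sum_tsub_distrib _ hcommon]
  rw [← card_eq_sum_ones] at hle ⊢
  omega

theorem sum_distTwoPairs_eq_finsum (f : ℕ → ℕ) :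
    ∑ p ∈ distTwoPairs G, f (G.commonNeighbors p.1 p.2).ncard =
      ∑ᶠ (s : Finset V) (_ : #s = 2 ∧ ∃ u ∈ s, ∃ v ∈ s, u ≠ v ∧ G.edist u v = 2),
        2 * f {w : V | ∀ u ∈ s, G.Adj u w}.ncard := by
  have hpair (u v : V) :
      {w | ∀ x ∈ ({u, v} : Finset V), G.Adj x w} = G.commonNeighbors u v := by
    ext w
    simp [G.mem_commonNeighbors]
  rw [finsum_cond_eq_sum_of_cond_iff _ fun _ => (mem_filter_univ _).symm]
  simpa only [distTwoPairs, hpair, smul_eq_mul] using sum_filter_rel_eq_sum_card_two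
    (fun u v => G.edist u v = 2) (fun u v h => by rwa [SimpleGraph.edist_comm])
    (fun u h => by simp at h) (fun s => f {w | ∀ u ∈ s, G.Adj u w}.ncard)

theorem subgraphCount_cycleGraph_three :
    subgraphCount G (SimpleGraph.cycleGraph 3) = #(G.cliqueFinset 3) := by
  have hcopies : {s : Set V | Nonempty (G.induce s ≃g SimpleGraph.cycleGraph 3)} =
      (↑) '' G.cliqueSet 3 := by
    ext s
    simp only [Set.mem_ofPred_eq, SimpleGraph.cycleGraph_three_eq_top,
      SimpleGraph.nonempty_iso_top_iff, SimpleGraph.induce_eq_top, Set.mem_image,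
      SimpleGraph.mem_cliqueSet_iff, SimpleGraph.isNClique_iff]
    constructor
    · rintro ⟨hclique, ⟨e⟩⟩
      refine ⟨s.toFinite.toFinset, ⟨by simpa using hclique, ?_⟩, by simp⟩
      rw [← Set.ncard_eq_toFinset_card, ← Nat.card_coe_set_eq, Nat.card_congr e, Nat.card_fin]
    · rintro ⟨t, ⟨hclique, hcard⟩, rfl⟩
      exact ⟨hclique, ⟨t.equivFinOfCardEq hcard⟩⟩
  rw [subgraphCount, hcopies, Set.ncard_image_of_injective _ Finset.coe_injective,
    ← SimpleGraph.coe_cliqueFinset, Set.ncard_coe_finset]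

end EulerianMagnitude

/-- for a finite simple graph `G`,
`rank EMH_{2,2}(G) = 6·c(G,C₃) + Σ_{{u,v} : d(u,v)=2} 2·(|V_{u,v}| - 1)`, where the sum
ranges over unordered pairs (2-element subsets) `{u,v}` of vertices at distance 2 and
`V_{u,v}` is the set of common neighbours of `u` and `v`. -/
theorem rank_emh22_eq {V : Type*} [Fintype V] (G : SimpleGraph V) :
    Module.finrank ℤ (EMHkk G 2) =
      6 * subgraphCount G (SimpleGraph.cycleGraph 3) +
      ∑ᶠ (s : Finset V)
        (_ : s.card = 2 ∧ ∃ u ∈ s, ∃ v ∈ s, u ≠ v ∧ G.edist u v = 2),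
        2 * (Set.ncard {w : V | ∀ u ∈ s, G.Adj u w} - 1) := by
  rw [finrank_EMHkk_two, subgraphCount_cycleGraph_three,
    sum_distTwoPairs_eq_finsum G (· - 1)]
end

section
/- Fix an integer k ≥ 1 and a real q > (k+1)/(2k−1). For each n, let μ_n = μ_{n,p_n} be the Erdős–Rényi measure with p_n = n^{−q}, and let N_n(ω) = |{x̄ ∈ ET_{k,k}(G_ω) : ∂_{k,k}(x̄) = 0}| be the number of eulerian k-trails of length k in G_ω with vanishing differential; equivalently, N_n(ω) is the number of injective (k+1)-tuples (x_0,…,x_k) of vertices of G_ω with x_i adjacent to x_{i+1} for all 0 ≤ i ≤ k−1 and x_{i−1} adjacent to x_{i+1} for all 1 ≤ i ≤ k−1. Then the expectation E_{μ_n}[N_n] tends to 0 as n → ∞. -/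
open scoped Classical

variable {V : Type*}

open MeasureTheory
open scoped ENNReal

/-- The Erdős–Rényi measure `μ_{n,p}` on `Ω_n`, the space of `{0,1}`-labellings of the
(unordered) pairs of vertices of `{1,…,n}`: each coordinate is an independent
Bernoulli(`p`) variable. -/
noncomputable def erMeasure (n : ℕ) (p : ℝ≥0∞) (hp : p ≤ 1) :
    Measure (Sym2 (Fin n) → Bool) :=
  Measure.pi fun _ => (PMF.bernoulli p.toNNReal (by simpa using ENNReal.toNNReal_mono ENNReal.one_ne_top hp)).toMeasure

/-- The simple graph `G_ω` determined by `ω ∈ Ω_n`: distinct `u, v` are adjacent iff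
`ω({u,v}) = 1`. -/
def erGraph {n : ℕ} (ω : Sym2 (Fin n) → Bool) : SimpleGraph (Fin n) :=
  SimpleGraph.fromRel fun u v => ω s(u, v) = true

/-- The number of eulerian `k`-trails of length `k` in `G` with vanishing differential. -/
noncomputable def emZeroDiffCount {V' : Type*} (G : SimpleGraph V') (k : ℕ) : ℕ :=
  Set.ncard {l : List V' | l ∈ etrails G k k ∧ bdry G k (Finsupp.single l 1) = 0}

lemma q_pos_of_gt {k : ℕ} (hk : 1 ≤ k) {q : ℝ}
    (hq : ((k : ℝ) + 1) / (2 * (k : ℝ) - 1) < q) : 0 < q := by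
  have hk' : (1 : ℝ) ≤ (k : ℝ) := by exact_mod_cast hk
  have h : 0 < ((k : ℝ) + 1) / (2 * (k : ℝ) - 1) := div_pos (by linarith) (by linarith)
  linarith

lemma ofReal_rpow_neg_le_one (n : ℕ) {q : ℝ} (hq : 0 < q) :
    ENNReal.ofReal ((n : ℝ) ^ (-q)) ≤ 1 := by
  rcases Nat.eq_zero_or_pos n with rfl | hn
  · simp [Real.zero_rpow (neg_ne_zero.mpr hq.ne')]
  · exact ENNReal.ofReal_le_one.mpr
      (Real.rpow_le_one_of_one_le_of_nonpos (by exact_mod_cast hn) (by linarith))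

/-!
A trail counted by `emZeroDiffCount` has `k + 1` distinct entries and length `k`, so it is a path
`x₀ ~ x₁ ~ ⋯ ~ x_k`. Its faces are pairwise distinct generators, so `∂ = 0` means that no face
`∂^i` has length `k`; since deleting `x_i` replaces two unit steps by `d(x_{i-1}, x_{i+1}) ≤ 2`,
this forces `x_{i-1} ~ x_{i+1}`. Hence every counted trail is an injective tuple whose `2k - 1`
pairs at index distance one or two are all edges, an event of probability `p^(2k-1)`. The
expectation is therefore at most `n^(k+1) p^(2k-1) = n^(k+1-q(2k-1)) → 0`.
-/

open Finset Filter Topology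

lemma List.Nodup.eraseIdx_ne_eraseIdx {l : List V} (hl : l.Nodup) {i j : ℕ} (hi : i < l.length)
    (hj : j < l.length) (hij : i ≠ j) : l.eraseIdx i ≠ l.eraseIdx j := by
  rw [← hl.erase_getElem i hi, ← hl.erase_getElem j hj]
  intro h
  have hmem : l[i] ∈ l.erase l[j] :=
    hl.mem_erase_iff.2 ⟨fun h' => hij (hl.getElem_inj_iff.1 h'), List.getElem_mem hi⟩
  rw [← h] at hmem
  exact (hl.mem_erase_iff.1 hmem).1 rfl

lemma List.eq_take_append_cons_cons_cons (l : List V) {j : ℕ} (hj : j + 2 < l.length) :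
    l = l.take j ++ l[j] :: l[j + 1] :: l[j + 2] :: l.drop (j + 3) := by
  conv_lhs => rw [← List.take_append_drop j l]
  rw [List.drop_eq_getElem_cons (by omega), List.drop_eq_getElem_cons (by omega),
    List.drop_eq_getElem_cons hj]

lemma List.eraseIdx_add_one_eq (l : List V) {j : ℕ} (hj : j + 2 < l.length) :
    l.eraseIdx (j + 1) = l.take j ++ l[j] :: l[j + 2] :: l.drop (j + 3) := by
  conv_lhs => rw [List.eq_take_append_cons_cons_cons l hj]
  have hlen : (l.take j).length = j := List.length_take_of_le (by omega)
  rw [List.eraseIdx_append_of_length_le (by omega), hlen, Nat.add_sub_cancel_left]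
  rfl

section Trails

variable {G : SimpleGraph V}

lemma mlen_cons_cons (a b : V) (l : List V) :
    mlen G (a :: b :: l) = G.edist a b + mlen G (b :: l) := rfl

lemma mlen_append_cons (l₁ : List V) (a : V) (l₂ : List V) :
    mlen G (l₁ ++ a :: l₂) = mlen G (l₁ ++ [a]) + mlen G (a :: l₂) := by
  induction l₁ with
  | nil => simp [mlen]
  | cons b l₁ ih =>
    cases l₁ with
    | nil => simp [mlen_cons_cons, mlen]
    | cons c l₁ =>
      simp only [List.cons_append, mlen_cons_cons] at ih ⊢
      rw [ih, add_assoc]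

lemma length_le_mlen_add_one : ∀ {l : List V}, IsTrailList G l → (l.length : ℕ∞) ≤ mlen G l + 1
  | [], _ => by simp [mlen]
  | [_], _ => by simp [mlen]
  | a :: b :: l, h => by
    obtain ⟨⟨hab, -⟩, h⟩ := List.isChain_cons_cons.1 h
    calc ((a :: b :: l).length : ℕ∞) = 1 + (b :: l).length := by simp [add_comm]
      _ ≤ G.edist a b + (mlen G (b :: l) + 1) :=
        add_le_add (Order.one_le_iff_pos.2 (G.edist_pos_of_ne hab)) (length_le_mlen_add_one h)
      _ = mlen G (a :: b :: l) + 1 := by rw [mlen_cons_cons, add_assoc]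

lemma IsTrailList.isChain_adj_of_mlen_add_one_le :
    ∀ {l : List V}, IsTrailList G l → mlen G l + 1 ≤ l.length → l.IsChain G.Adj
  | [], _, _ => List.isChain_nil
  | [_], _, _ => List.isChain_singleton _
  | a :: b :: l, h, hm => by
    obtain ⟨⟨hne, -⟩, h⟩ := List.isChain_cons_cons.1 h
    have hab := Order.one_le_iff_pos.2 (G.edist_pos_of_ne hne)
    have hl := length_le_mlen_add_one h
    rw [mlen_cons_cons] at hm
    have hfin : G.edist a b + mlen G (b :: l) ≠ ⊤ := fun htop => by simp [htop] at hm
    lift G.edist a b to ℕ using (WithTop.add_ne_top.1 hfin).1 with d hd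
    lift mlen G (b :: l) to ℕ using (WithTop.add_ne_top.1 hfin).2 with m hm'
    simp only [List.length_cons] at hm hl
    norm_cast at hm hl hab
    refine List.isChain_cons_cons.2
      ⟨G.edist_eq_one_iff_adj.1 ?_, IsTrailList.isChain_adj_of_mlen_add_one_le h ?_⟩
    · rw [← hd]; norm_cast; omega
    · rw [← hm']; norm_cast; simp only [List.length_cons]; omega

lemma mlen_append_cons_cons_add (l₁ : List V) (a b c : V) (l₂ : List V) :
    mlen G (l₁ ++ a :: c :: l₂) + (G.edist a b + G.edist b c) =
      mlen G (l₁ ++ a :: b :: c :: l₂) + G.edist a c := by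
  rw [mlen_append_cons l₁ a (c :: l₂), mlen_append_cons l₁ a (b :: c :: l₂), mlen_cons_cons,
    mlen_cons_cons, mlen_cons_cons]
  ring

lemma adj_getElem_add_two_of_mlen_eraseIdx_ne {l : List V} (hl : l.Nodup) (hadj : l.IsChain G.Adj)
    {j : ℕ} (hj : j + 2 < l.length) (hne : mlen G (l.eraseIdx (j + 1)) ≠ mlen G l) :
    G.Adj l[j] l[j + 2] := by
  have hab : G.Adj l[j] l[j + 1] := List.isChain_iff_getElem.1 hadj j (by omega)
  have hbc : G.Adj l[j + 1] l[j + 2] := List.isChain_iff_getElem.1 hadj (j + 1) hj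
  by_contra hac
  have hac_ne : l[j] ≠ l[j + 2] := fun h => by
    have := (hl.getElem_inj_iff).1 h
    omega
  have hdist : G.edist l[j] l[j + 2] = 2 :=
    G.edist_eq_two_iff.2 ⟨hac_ne, hac, l[j + 1], G.mem_commonNeighbors.2 ⟨hab, hbc.symm⟩⟩
  apply hne
  have key := mlen_append_cons_cons_add (G := G) (l.take j) l[j] l[j + 1] l[j + 2] (l.drop (j + 3))
  rw [← List.eraseIdx_add_one_eq l hj, ← List.eq_take_append_cons_cons_cons l hj, hdist,
    G.edist_eq_one_iff_adj.2 hab, G.edist_eq_one_iff_adj.2 hbc, one_add_one_eq_two] at key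
  exact WithTop.add_right_cancel (ENat.ofNat_ne_top 2) key

end Trails

section Boundary

variable {G : SimpleGraph V}

lemma bdry_single_one (ℓ : ℕ) (l : List V) : bdry G ℓ (Finsupp.single l 1) = bdryElt G ℓ l := by
  rw [bdry, Finsupp.lsum_single, LinearMap.toSpanSingleton_apply, one_smul]

/-- The faces of a generator without repeated entries are pairwise distinct, so none cancel. -/
lemma mlen_eraseIdx_ne_of_bdryElt_eq_zero {ℓ : ℕ} {l : List V} (hl : l.Nodup)
    (h : bdryElt G ℓ l = 0) {i : ℕ} (hi : i ∈ Ioo 0 (l.length - 1)) :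
    mlen G (l.eraseIdx i) ≠ ℓ := by
  intro hmi
  have hcoeff := DFunLike.congr_fun h (l.eraseIdx i)
  rw [bdryElt, Finsupp.finsetSum_apply, Finset.sum_eq_single_of_mem i hi] at hcoeff
  · simp [hmi] at hcoeff
  · intro j hj hji
    have hne := hl.eraseIdx_ne_eraseIdx (by simp at hj; omega) (by simp at hi; omega) hji
    split_ifs <;> simp [hne]

lemma isChain_adj_of_mem_trails {k : ℕ} {l : List V} (hl : l ∈ trails G k k) :
    l.IsChain G.Adj := by
  obtain ⟨hlen, htrail, hmlen⟩ := hl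
  exact htrail.isChain_adj_of_mlen_add_one_le (by rw [hmlen, hlen]; push_cast; rfl)

lemma adj_getElem_add_two_of_bdry_single_eq_zero {k : ℕ} {l : List V} (hl : l ∈ etrails G k k)
    (hb : bdry G k (Finsupp.single l 1) = 0) {j : ℕ} (hj : j + 2 < l.length) :
    G.Adj l[j] l[j + 2] := by
  obtain ⟨htrail, hnodup⟩ := hl
  refine adj_getElem_add_two_of_mlen_eraseIdx_ne hnodup (isChain_adj_of_mem_trails htrail) hj ?_
  obtain ⟨hlen, -, hmlen⟩ := htrail
  rw [hmlen]
  exact mlen_eraseIdx_ne_of_bdryElt_eq_zero hnodup (bdry_single_one k l ▸ hb) (by simp; omega)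

end Boundary

noncomputable def nearPairs {k : ℕ} (x : Fin (k + 1) → V) : Finset (Sym2 V) :=
  univ.image (Sum.elim (fun i : Fin k => s(x i.castSucc, x i.succ))
    fun i : Fin (k - 1) => s(x ⟨i, by omega⟩, x ⟨i + 2, by omega⟩))

lemma card_nearPairs {k : ℕ} {x : Fin (k + 1) → V} (hx : Function.Injective x) :
    #(nearPairs x) = k + (k - 1) := by
  rw [nearPairs, card_image_of_injective _ ?_, card_univ, Fintype.card_sum, Fintype.card_fin,
    Fintype.card_fin]
  rintro (i | i) (j | j) h <;>
    simp only [Sum.elim_inl, Sum.elim_inr, Sym2.eq_iff, hx.eq_iff, Fin.ext_iff, Fin.val_castSucc,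
      Fin.val_succ, Sum.inl.injEq, Sum.inr.injEq, reduceCtorEq] at h ⊢ <;> omega

lemma emZeroDiffCount_le_card [Fintype V] (G : SimpleGraph V) (k : ℕ) :
    emZeroDiffCount G k ≤
      #{x : Fin (k + 1) → V | Function.Injective x ∧ ∀ e ∈ nearPairs x, e ∈ G.edgeSet} := by
  set T : Finset (Fin (k + 1) → V) :=
    {x | Function.Injective x ∧ ∀ e ∈ nearPairs x, e ∈ G.edgeSet}
  suffices hsub : {l | l ∈ etrails G k k ∧ bdry G k (Finsupp.single l 1) = 0} ⊆
      T.image List.ofFn by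
    calc emZeroDiffCount G k ≤ (T.image List.ofFn : Set (List V)).ncard :=
          Set.ncard_le_ncard hsub (Finset.finite_toSet _)
      _ ≤ #T := (Set.ncard_coe_finset _).trans_le card_image_le
  rintro l ⟨hl, hb⟩
  have hadj := List.isChain_iff_getElem.1 (isChain_adj_of_mem_trails hl.1)
  have hskip : ∀ j (hj : j + 2 < l.length), G.Adj l[j] l[j + 2] := fun _ hj =>
    adj_getElem_add_two_of_bdry_single_eq_zero hl hb hj
  obtain ⟨⟨hlen, -, -⟩, hnodup⟩ := hl
  refine mem_image.2
    ⟨fun i => l[i.1], ?_, List.ext_getElem (by simp [hlen]) fun i _ _ => List.getElem_ofFn ..⟩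
  refine mem_filter.2 ⟨mem_univ _, fun i j hij => Fin.ext (hnodup.getElem_inj_iff.1 hij), ?_⟩
  simp only [nearPairs, mem_image, mem_univ, true_and]
  rintro e ⟨i | i, rfl⟩
  · exact hadj i (by omega)
  · exact hskip i (by omega)

lemma mem_edgeSet_erGraph {n : ℕ} {ω : Sym2 (Fin n) → Bool} {e : Sym2 (Fin n)}
    (he : e ∈ (erGraph ω).edgeSet) : ω e = true := by
  induction e using Sym2.ind with
  | _ u v =>
    rw [SimpleGraph.mem_edgeSet, erGraph, SimpleGraph.fromRel_adj] at he
    rcases he.2 with h | h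
    · exact h
    · rwa [Sym2.eq_swap]

lemma lintegral_le_sum_measure_of_le_card {Ω ι : Type*} [MeasurableSpace Ω] (μ : Measure Ω)
    {f : Ω → ℕ} (s : Finset ι) {A : ι → Set Ω} [∀ ω, DecidablePred fun i => ω ∈ A i]
    (hA : ∀ i ∈ s, MeasurableSet (A i)) (hf : ∀ ω, f ω ≤ #{i ∈ s | ω ∈ A i}) :
    ∫⁻ ω, (f ω : ℝ≥0∞) ∂μ ≤ ∑ i ∈ s, μ (A i) := by
  calc ∫⁻ ω, (f ω : ℝ≥0∞) ∂μ ≤ ∫⁻ ω, ∑ i ∈ s, (A i).indicator 1 ω ∂μ := by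
        refine lintegral_mono fun ω => ?_
        have hω := hf ω
        rw [card_filter] at hω
        simpa only [Set.indicator_apply, Pi.one_apply] using (by exact_mod_cast hω :
          (f ω : ℝ≥0∞) ≤ ∑ i ∈ s, if ω ∈ A i then 1 else 0)
    _ = ∑ i ∈ s, μ (A i) := by
        rw [lintegral_finsetSum _ fun i hi => measurable_one.indicator (hA i hi)]
        exact sum_congr rfl fun i hi => lintegral_indicator_one (hA i hi)

lemma erMeasure_setOf_forall_mem_eq_true {n : ℕ} {p : ℝ≥0∞} (hp : p ≤ 1)
    (F : Finset (Sym2 (Fin n))) : erMeasure n p hp {ω | ∀ e ∈ F, ω e = true} = p ^ #F := by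
  have hpi : {ω : Sym2 (Fin n) → Bool | ∀ e ∈ F, ω e = true} =
      Set.univ.pi fun e => if e ∈ F then {true} else Set.univ := by
    ext ω
    simp only [Set.mem_ofPred_eq, Set.mem_univ_pi]
    refine forall_congr' fun e => ?_
    split_ifs <;> simp [*]
  rw [erMeasure, hpi, Measure.pi_pi]
  simp only [apply_ite, measure_univ]
  rw [prod_ite_mem, univ_inter, prod_const,
    PMF.toMeasure_apply_singleton _ _ (measurableSet_singleton _)]
  exact congrArg (· ^ #F) (ENNReal.coe_toNNReal (ne_top_of_le_ne_top ENNReal.one_ne_top hp))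

lemma lintegral_emZeroDiffCount_erGraph_le (n k : ℕ) {p : ℝ≥0∞} (hp : p ≤ 1) :
    ∫⁻ ω, (emZeroDiffCount (erGraph ω) k : ℝ≥0∞) ∂erMeasure n p hp ≤
      n ^ (k + 1) * p ^ (k + (k - 1)) := by
  set A : (Fin (k + 1) → Fin n) → Set (Sym2 (Fin n) → Bool) :=
    fun x => {ω | ∀ e ∈ nearPairs x, ω e = true}
  have hcount : ∀ ω, emZeroDiffCount (erGraph ω) k ≤
      #{x ∈ ({x | Function.Injective x} : Finset _) | ω ∈ A x} := fun ω =>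
    (emZeroDiffCount_le_card _ k).trans <| card_le_card fun x hx => by
      simp only [mem_filter, mem_univ, true_and] at hx ⊢
      exact ⟨hx.1, fun e he => mem_edgeSet_erGraph (hx.2 e he)⟩
  calc _ ≤ ∑ x ∈ ({x | Function.Injective x} : Finset _), erMeasure n p hp (A x) :=
        lintegral_le_sum_measure_of_le_card _ _ (fun _ _ => .of_discrete) hcount
    _ = #({x | Function.Injective x} : Finset (Fin (k + 1) → Fin n)) * p ^ (k + (k - 1)) := by
        rw [sum_congr rfl fun x hx => by
          rw [erMeasure_setOf_forall_mem_eq_true, card_nearPairs (mem_filter.1 hx).2], sum_const,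
          nsmul_eq_mul]
    _ ≤ n ^ (k + 1) * p ^ (k + (k - 1)) := by
        gcongr
        exact_mod_cast (card_filter_le _ _).trans_eq (by simp)

lemma tendsto_natCast_pow_mul_ofReal_rpow_neg_pow {a b : ℕ} {q : ℝ} (h : (a : ℝ) < q * b) :
    Tendsto (fun n : ℕ => (n : ℝ≥0∞) ^ a * ENNReal.ofReal ((n : ℝ) ^ (-q)) ^ b) atTop (𝓝 0) := by
  have hpow : Tendsto (fun n : ℕ => ENNReal.ofReal ((n : ℝ) ^ (a - q * b))) atTop (𝓝 0) := by
    simpa using ENNReal.tendsto_ofReal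
      ((tendsto_rpow_neg_atTop (by linarith : 0 < q * b - a)).comp tendsto_natCast_atTop_atTop)
  refine hpow.congr' ((eventually_gt_atTop 0).mono fun n hn => ?_)
  dsimp only
  have hn : (0 : ℝ) < n := by exact_mod_cast hn
  rw [← ENNReal.ofReal_natCast, ← ENNReal.ofReal_pow hn.le, ← ENNReal.ofReal_pow (by positivity),
    ← ENNReal.ofReal_mul (by positivity), ← Real.rpow_natCast, ← Real.rpow_natCast,
    ← Real.rpow_mul hn.le, ← Real.rpow_add hn]
  ring_nf

/-- Lemma 4.3: fix `k ≥ 1` and `q > (k+1)/(2k-1)`.  For `p_n = n^{-q}`,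
the expected number of eulerian `k`-trails of length `k` with vanishing differential in
`G(n, p_n)` tends to `0` as `n → ∞`. -/
theorem er_expected_zero_diff_trails_tendsto_zero (k : ℕ) (hk : 1 ≤ k) (q : ℝ)
    (hq : ((k : ℝ) + 1) / (2 * (k : ℝ) - 1) < q) :
    Filter.Tendsto
      (fun n : ℕ => ∫⁻ ω, (emZeroDiffCount (erGraph ω) k : ℝ≥0∞)
        ∂ erMeasure n (ENNReal.ofReal ((n : ℝ) ^ (-q)))
            (ofReal_rpow_neg_le_one n (q_pos_of_gt hk hq)))
      Filter.atTop (nhds 0) := by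
  have hk' : (1 : ℝ) ≤ k := by exact_mod_cast hk
  have hexp : ((k + 1 : ℕ) : ℝ) < q * ((k + (k - 1) : ℕ) : ℝ) := by
    push_cast [Nat.cast_sub hk]
    linarith [(div_lt_iff₀ (by linarith : (0 : ℝ) < 2 * k - 1)).1 hq]
  exact tendsto_of_tendsto_of_tendsto_of_le_of_le tendsto_const_nhds
    (tendsto_natCast_pow_mul_ofReal_rpow_neg_pow hexp) (fun _ => bot_le)
    fun n => lintegral_emZeroDiffCount_erGraph_le n k _
end
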